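/- If Q ≻ 0, λ ∈ (0,1), and the block matrix [[(λ-1)Q, 0, QAᵀ + YᵀBᵀ], [0, -λI, B_wᵀ + F_wᵀBᵀ], [(AQ + BY), (B_w + BF_w), -Q]] ⪯ 0, then with A_cl = A + B Y Q⁻¹ and B_cl = B_w + B F_w, every x with xᵀQ⁻¹x ≤ 1 and every w with wᵀw ≤ 1 satisfy (A_cl x + B_cl w)ᵀ Q⁻¹ (A_cl x + B_cl w) ≤ 1. -/

import Mathlib

/-!
Taking the Schur complement of the `-Q` block, the LMI says
`C̃ᵀ Q⁻¹ C̃ ⪯ diag((1 - λ) Q, λ I)` with `C̃ = [A Q + B Y, B_cl]`.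
The vector `(Q⁻¹ x, w)` is mapped by `C̃` to the successor state `x⁺ = A_cl x + B_cl w`, so
`x⁺ᵀ Q⁻¹ x⁺ ≤ (1 - λ) xᵀ Q⁻¹ x + λ wᵀ w`, a convex combination of two numbers at most `1`.
-/

open Matrix

section

variable {ι κ : Type*} [Fintype ι] [Fintype κ]

theorem sumElim_dotProduct_fromBlocks_zero_zero_mulVec {R : Type*} [NonUnitalNonAssocSemiring R]
    (P : Matrix ι ι R) (S : Matrix κ κ R) (u : ι → R) (v : κ → R) :
    Sum.elim u v ⬝ᵥ fromBlocks P 0 0 S *ᵥ Sum.elim u v = u ⬝ᵥ P *ᵥ u + v ⬝ᵥ S *ᵥ v := by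
  simp only [fromBlocks_mulVec, Sum.elim_comp_inl, Sum.elim_comp_inr, zero_mulVec, add_zero,
    zero_add, sumElim_dotProduct_sumElim]

theorem dotProduct_inv_mulVec_le_of_posSemidef_neg_fromBlocks [DecidableEq κ]
    {M : Matrix ι ι ℝ} {C : Matrix κ ι ℝ} {Q : Matrix κ κ ℝ} (hQ : Q.PosDef)
    (hLMI : (-(fromBlocks M Cᵀ C (-Q))).PosSemidef) (z : ι → ℝ) :
    (C *ᵥ z) ⬝ᵥ Q⁻¹ *ᵥ (C *ᵥ z) ≤ -(z ⬝ᵥ M *ᵥ z) := by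
  have := hQ.isUnit.invertible
  have hSchur : (-M - Cᵀ * Q⁻¹ * C).PosSemidef := by
    rw [fromBlocks_neg, neg_neg, show -C = (-Cᵀ)ᴴ by simp] at hLMI
    simpa using (PosDef.fromBlocks₂₂ _ _ hQ).mp hLMI
  have := hSchur.dotProduct_mulVec_nonneg z
  rw [star_trivial, sub_mulVec, neg_mulVec, dotProduct_sub, dotProduct_neg, ← mulVec_mulVec,
    ← mulVec_mulVec, dotProduct_mulVec z Cᵀ, vecMul_transpose] at this
  linarith

end

theorem stmt17_general (n m : ℕ) (A : Matrix (Fin n) (Fin n) ℝ)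
    (B : Matrix (Fin n) (Fin 1) ℝ) (Bw : Matrix (Fin n) (Fin m) ℝ)
    (Y : Matrix (Fin 1) (Fin n) ℝ) (Fw : Matrix (Fin 1) (Fin m) ℝ)
    (Q : Matrix (Fin n) (Fin n) ℝ) (hQ : Q.PosDef)
    (lam : ℝ) (hlam0 : 0 < lam) (hlam1 : lam < 1)
    (hLMI : (-(Matrix.fromBlocks
        (Matrix.fromBlocks ((lam - 1) • Q) 0 0 ((-lam) • (1 : Matrix (Fin m) (Fin m) ℝ)))
        (Matrix.fromRows (Q * Aᵀ + Yᵀ * Bᵀ) (Bwᵀ + Fwᵀ * Bᵀ))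
        (Matrix.fromCols (A * Q + B * Y) (Bw + B * Fw))
        (-Q))).PosSemidef)
    (Acl : Matrix (Fin n) (Fin n) ℝ) (hAcl : Acl = A + B * Y * Q⁻¹)
    (Bcl : Matrix (Fin n) (Fin m) ℝ) (hBcl : Bcl = Bw + B * Fw) :
    ∀ (x : Fin n → ℝ) (w : Fin m → ℝ),
      x ⬝ᵥ Q⁻¹.mulVec x ≤ 1 → w ⬝ᵥ w ≤ 1 →
      (Acl.mulVec x + Bcl.mulVec w) ⬝ᵥ Q⁻¹.mulVec (Acl.mulVec x + Bcl.mulVec w) ≤ 1 := by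
  intro x w hx hw
  have hQQ : Q * Q⁻¹ = 1 := mul_nonsing_inv Q ((isUnit_iff_isUnit_det Q).mp hQ.isUnit)
  have hQx : Q *ᵥ (Q⁻¹ *ᵥ x) = x := by rw [mulVec_mulVec, hQQ, one_mulVec]
  have hTop : fromRows (Q * Aᵀ + Yᵀ * Bᵀ) (Bwᵀ + Fwᵀ * Bᵀ) =
      (fromCols (A * Q + B * Y) (Bw + B * Fw))ᵀ := by
    simp [transpose_fromCols, transpose_add, transpose_mul, (isHermitian_iff_isSymm.mp hQ.1).eq]
  rw [hTop] at hLMI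
  have hBound := dotProduct_inv_mulVec_le_of_posSemidef_neg_fromBlocks hQ hLMI
    (Sum.elim (Q⁻¹ *ᵥ x) w)
  have hSucc : fromCols (A * Q + B * Y) (Bw + B * Fw) *ᵥ Sum.elim (Q⁻¹ *ᵥ x) w =
      Acl *ᵥ x + Bcl *ᵥ w := by
    rw [fromCols_mulVec_sumElim, mulVec_mulVec, hAcl, hBcl, add_mul, mul_assoc A, hQQ, mul_one]
  rw [hSucc, sumElim_dotProduct_fromBlocks_zero_zero_mulVec, smul_mulVec, hQx, smul_mulVec,
    one_mulVec, dotProduct_smul, dotProduct_smul, dotProduct_comm (Q⁻¹ *ᵥ x) x] at hBound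
  simp only [smul_eq_mul] at hBound
  nlinarith

/-- The LMI certifies that the ellipsoid {x : xᵀQ⁻¹x ≤ 1} is inescapable for the
closed-loop dynamics x⁺ = A_cl x + B_cl w under unit-norm disturbances, where
A_cl = A + B Y Q⁻¹ and B_cl = Bw + B Fw. -/
theorem stmt17 (n m : ℕ) (A : Matrix (Fin n) (Fin n) ℝ)
    (B : Matrix (Fin n) (Fin 1) ℝ) (Bw : Matrix (Fin n) (Fin m) ℝ)
    (Y : Matrix (Fin 1) (Fin n) ℝ) (Fw : Matrix (Fin 1) (Fin m) ℝ)
    (Q : Matrix (Fin n) (Fin n) ℝ) (hQs : Q.IsSymm) (hQ : Q.PosDef)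
    (lam : ℝ) (hlam0 : 0 < lam) (hlam1 : lam < 1)
    (hLMI : (-(Matrix.fromBlocks
        (Matrix.fromBlocks ((lam - 1) • Q) 0 0 ((-lam) • (1 : Matrix (Fin m) (Fin m) ℝ)))
        (Matrix.fromRows (Q * Aᵀ + Yᵀ * Bᵀ) (Bwᵀ + Fwᵀ * Bᵀ))
        (Matrix.fromCols (A * Q + B * Y) (Bw + B * Fw))
        (-Q))).PosSemidef)
    (Acl : Matrix (Fin n) (Fin n) ℝ) (hAcl : Acl = A + B * Y * Q⁻¹)
    (Bcl : Matrix (Fin n) (Fin m) ℝ) (hBcl : Bcl = Bw + B * Fw) :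
    ∀ (x : Fin n → ℝ) (w : Fin m → ℝ),
      x ⬝ᵥ Q⁻¹.mulVec x ≤ 1 → w ⬝ᵥ w ≤ 1 →
      (Acl.mulVec x + Bcl.mulVec w) ⬝ᵥ Q⁻¹.mulVec (Acl.mulVec x + Bcl.mulVec w) ≤ 1 :=
  stmt17_general n m A B Bw Y Fw Q hQ lam hlam0 hlam1 hLMI Acl hAcl Bcl hBcl
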